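/- For every real s ≥ 1/(2√2), the operator norm of A_s on ℓ² equals 4: sup_{x≠0, x∈ℓ²} ‖A_s x‖₂/‖x‖₂ = 4. -/

import Mathlib

/-!
Write `S_n x = x_0 + ⋯ + x_n` and `w_n = 1/((n+s)(n+s+1)) = 1/(n+s) - 1/(n+s+1)`. Summing the
telescoping tail gives `1/(max i j + s) = ∑_{n ≥ max i j} w_n`, i.e.
`A_s = ∑_n w_n 𝟙_{[0,n]} 𝟙_{[0,n]}ᵀ`, so `⟨z, A_s u⟩ = ∑_n w_n S_n z S_n u` for finitely
supported `z, u`.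

Upper bound: the discrete Hardy inequality `∑_n w_n (S_n x)² ≤ 4 ‖x‖²` holds for
`s ≥ 0.3535` (a rational lower bound for `1/(2√2)`); it is proved by induction on `N`, carrying the
remainder `2/(N + 21/20) · (S_N x)²` on the left. Cauchy–Schwarz for the positive form
`∑ w_n S_n z S_n u` then gives `⟨z, A_s u⟩ ≤ 4 ‖z‖ ‖u‖`, first for finitely supported vectors and,
by truncation, for all of `ℓ²`; testing against `z = A_s x` cut off at `M` yields `‖A_s x‖ ≤ 4 ‖x‖`.

Lower bound: `x_k = √(k+1) - √k` for `k < N` has partial sums `√(n+1)`, so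
`⟨x, A_s x⟩ ≥ ∑_{n<N} (n+1) w_n ≥ log N - O(1)`, while `‖x‖² ≤ (log N)/4 + O(1)`. Since
`‖A_s x‖/‖x‖ ≥ ⟨x, A_s x⟩/‖x‖²`, the ratios tend to `4`.
-/

/-- The operator norm of the `L`-matrix `A_s = [1/(max(i,j)+s)]` acting on `ℓ²`,
defined as the supremum of the ratios `‖A_s x‖₂ / ‖x‖₂` over nonzero
square-summable real sequences `x`. -/
noncomputable def AsOpNorm (s : ℝ) : ℝ :=
  sSup { r : ℝ | ∃ x : ℕ → ℝ, Summable (fun n => (x n) ^ 2) ∧ x ≠ 0 ∧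
    r = Real.sqrt (∑' n : ℕ, (∑' j : ℕ, x j / ((max n j : ℝ) + s)) ^ 2) /
        Real.sqrt (∑' n : ℕ, (x n) ^ 2) }

open Finset Filter Topology

theorem Summable.mul_of_summable_sq {ι : Type*} {f g : ι → ℝ} (hf : Summable fun i => f i ^ 2)
    (hg : Summable fun i => g i ^ 2) : Summable fun i => f i * g i :=
  .of_norm_bounded ((hf.add hg).mul_left (1 / 2)) fun i => by
    rw [Real.norm_eq_abs, abs_mul]
    nlinarith [sq_nonneg (|f i| - |g i|), sq_abs (f i), sq_abs (g i)]

theorem tsum_mul_le_sqrt_mul_sqrt {ι : Type*} {f g : ι → ℝ} (hf : Summable fun i => f i ^ 2)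
    (hg : Summable fun i => g i ^ 2) :
    ∑' i, f i * g i ≤ √(∑' i, f i ^ 2) * √(∑' i, g i ^ 2) :=
  (hf.mul_of_summable_sq hg).tsum_le_of_sum_le fun t =>
    (Real.sum_mul_le_sqrt_mul_sqrt t f g).trans <| by
      gcongr
      · exact hf.sum_le_tsum t fun i _ => sq_nonneg _
      · exact hg.sum_le_tsum t fun i _ => sq_nonneg _

lemma tsum_eq_sum_range_of_eq_zero {v : ℕ → ℝ} {N : ℕ} (hv : ∀ n, N ≤ n → v n = 0) :
    ∑' n, v n = ∑ n ∈ range N, v n :=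
  tsum_eq_sum fun n hn => hv n (by simpa using hn)

lemma summable_sq_of_eq_zero {v : ℕ → ℝ} {N : ℕ} (hv : ∀ n, N ≤ n → v n = 0) :
    Summable fun n => v n ^ 2 :=
  summable_of_ne_finset_zero (s := range N) fun n hn => by
    rw [hv n (by simpa using hn), sq, zero_mul]

lemma le_sq_of_le_mul_sqrt {a b : ℝ} (h : a ≤ b * √a) : a ≤ b ^ 2 := by
  rcases le_or_gt a 0 with ha | ha
  · nlinarith [sq_nonneg b]
  · have hsa : 0 < √a := Real.sqrt_pos.mpr ha
    have hab : √a ≤ b := le_of_mul_le_mul_right (by rwa [Real.mul_self_sqrt ha.le]) hsa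
    calc a = √a ^ 2 := (Real.sq_sqrt ha.le).symm
      _ ≤ b ^ 2 := by gcongr

lemma mul_add_sq_le {c d : ℝ} (hc : 0 < c) (hd : d * (4 + c) ≤ 4 * c) (S x : ℝ) :
    d * (S + x) ^ 2 ≤ 4 * x ^ 2 + c * S ^ 2 := by
  have h4d : d < 4 := by nlinarith
  have key : (4 - d) * (4 * x ^ 2 + c * S ^ 2 - d * (S + x) ^ 2)
      = ((4 - d) * x - d * S) ^ 2 + (4 * c - 4 * d - c * d) * S ^ 2 := by ring
  nlinarith [sq_nonneg ((4 - d) * x - d * S),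
    mul_nonneg (by linarith : 0 ≤ 4 * c - 4 * d - c * d) (sq_nonneg S)]

lemma log_add_one_sub_log_le {x : ℝ} (hx : 0 < x) : Real.log (x + 1) - Real.log x ≤ 1 / x := by
  have h := Real.log_le_sub_one_of_pos (show 0 < (x + 1) / x by positivity)
  rw [Real.log_div (by positivity) hx.ne'] at h
  linarith [show (x + 1) / x - 1 = 1 / x by field_simp; ring]

lemma one_div_add_one_le_log_sub_log {x : ℝ} (hx : 0 < x) :
    1 / (x + 1) ≤ Real.log (x + 1) - Real.log x := by
  have h := Real.one_sub_inv_le_log_of_pos (show 0 < (x + 1) / x by positivity)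
  rw [Real.log_div (by positivity) hx.ne'] at h
  linarith [show 1 - ((x + 1) / x)⁻¹ = 1 / (x + 1) by field_simp; ring]

lemma log_add_sub_log_eq_sum_range (a : ℝ) (N : ℕ) :
    Real.log (N + a) - Real.log a = ∑ k ∈ range N, (Real.log (k + a + 1) - Real.log (k + a)) := by
  have h := sum_range_sub (fun k : ℕ => Real.log (k + a)) N
  push_cast at h
  simp only [zero_add, add_right_comm _ (1 : ℝ) a] at h
  exact h.symm

lemma log_add_sub_log_le_sum_range {a : ℝ} (ha : 0 < a) (N : ℕ) :
    Real.log (N + a) - Real.log a ≤ ∑ k ∈ range N, 1 / (k + a) := by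
  rw [log_add_sub_log_eq_sum_range]
  exact sum_le_sum fun k _ => log_add_one_sub_log_le (by positivity)

lemma sum_range_le_one_div_add_log_sub_log {a : ℝ} (ha : 0 < a) (N : ℕ) :
    ∑ k ∈ range N, 1 / (k + a) ≤ 1 / a + (Real.log (N + a) - Real.log a) := by
  calc ∑ k ∈ range N, 1 / (k + a) ≤ ∑ k ∈ range (N + 1), 1 / (k + a) :=
        sum_le_sum_of_subset_of_nonneg (range_subset_range.mpr N.le_succ) fun k _ _ => by positivity
    _ = ∑ k ∈ range N, 1 / (k + a + 1) + 1 / a := by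
        rw [sum_range_succ']
        push_cast
        simp only [zero_add, add_right_comm _ (1 : ℝ) a]
    _ ≤ 1 / a + (Real.log (N + a) - Real.log a) := by
        rw [log_add_sub_log_eq_sum_range, add_comm]
        gcongr with k
        exact one_div_add_one_le_log_sub_log (by positivity)

lemma tendsto_mul_sub_div_add_atTop (c a b : ℝ) :
    Tendsto (fun L => c * (L - a) / (L + b)) atTop (𝓝 c) := by
  have h : Tendsto (fun L => c - c * (a + b) / (L + b)) atTop (𝓝 c) := by
    simpa using tendsto_const_nhds.sub
      (tendsto_const_nhds.div_atTop (tendsto_atTop_add_const_right _ b tendsto_id))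
  refine h.congr' ?_
  filter_upwards [eventually_gt_atTop (-b)] with L hL
  have : L + b ≠ 0 := by linarith
  field_simp
  ring

lemma le_one_div_two_mul_sqrt_two : (707 / 2000 : ℝ) ≤ 1 / (2 * √2) := by
  rw [le_div_iff₀ (by positivity)]
  nlinarith [Real.sq_sqrt (show (0 : ℝ) ≤ 2 by norm_num), Real.sqrt_nonneg 2]

noncomputable def lWeight (s : ℝ) (n : ℕ) : ℝ := 1 / ((n + s) * (n + s + 1))

def partialSum (x : ℕ → ℝ) (n : ℕ) : ℝ := ∑ k ∈ range (n + 1), x k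

/-- Remainder carried by the induction for the Hardy inequality. With `R = hardyRemainder`, the
step needs `lWeight s (n+1) + R (n+1) ≤ 4 R n / (4 + R n) = 2/(n + 31/20)` (see `mul_add_sq_le`)
and the base case needs `lWeight s 0 + R 0 ≤ 4`; the constant `21/20` fits both once
`s ≥ 0.3535`. -/
noncomputable def hardyRemainder (n : ℕ) : ℝ := 2 / (n + 21 / 20)

section LWeight

variable {s : ℝ}

lemma lWeight_nonneg (hs : 0 ≤ s) (n : ℕ) : 0 ≤ lWeight s n := by
  unfold lWeight; positivity

lemma lWeight_zero_add_hardyRemainder_le (hs : 707 / 2000 ≤ s) :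
    lWeight s 0 + hardyRemainder 0 ≤ 4 := by
  have hw : lWeight s 0 ≤ 44 / 21 := by
    rw [lWeight, div_le_div_iff₀ (by push_cast; nlinarith) (by norm_num)]
    push_cast
    nlinarith
  norm_num [hardyRemainder] at hw ⊢
  linarith

lemma lWeight_succ_add_hardyRemainder_le (hs : 707 / 2000 ≤ s) (n : ℕ) :
    (lWeight s (n + 1) + hardyRemainder (n + 1)) * (4 + hardyRemainder n)
      ≤ 4 * hardyRemainder n := by
  have hn : (0 : ℝ) ≤ n := n.cast_nonneg
  have hw : lWeight s (n + 1) ≤ 1 / ((n + 31 / 20) * (n + 41 / 20)) :=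
    one_div_le_one_div_of_le (by positivity) (by push_cast; nlinarith)
  calc (lWeight s (n + 1) + hardyRemainder (n + 1)) * (4 + hardyRemainder n)
      ≤ (1 / ((n + 31 / 20) * (n + 41 / 20)) + hardyRemainder (n + 1))
          * (4 + hardyRemainder n) := by
        gcongr
        unfold hardyRemainder; positivity
    _ = 4 * hardyRemainder n := by
        unfold hardyRemainder
        push_cast
        field_simp
        ring

lemma sum_lWeight_mul_partialSum_sq_add_le (hs : 707 / 2000 ≤ s) (x : ℕ → ℝ) (N : ℕ) :
    ∑ n ∈ range (N + 1), lWeight s n * partialSum x n ^ 2 + hardyRemainder N * partialSum x N ^ 2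
      ≤ 4 * ∑ n ∈ range (N + 1), x n ^ 2 := by
  induction N with
  | zero =>
    have := mul_le_mul_of_nonneg_right (lWeight_zero_add_hardyRemainder_le hs) (sq_nonneg (x 0))
    simp only [zero_add, range_one, sum_singleton, partialSum]
    linarith
  | succ N ih =>
    have hstep := mul_add_sq_le (by unfold hardyRemainder; positivity)
      (lWeight_succ_add_hardyRemainder_le hs N) (partialSum x N) (x (N + 1))
    rw [sum_range_succ, sum_range_succ (fun n => x n ^ 2),
      show partialSum x (N + 1) = partialSum x N + x (N + 1) from sum_range_succ _ _]
    linarith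

lemma sum_range_lWeight_mul_partialSum_sq_le (hs : 707 / 2000 ≤ s) (x : ℕ → ℝ) (N : ℕ) :
    ∑ n ∈ range N, lWeight s n * partialSum x n ^ 2 ≤ 4 * ∑ n ∈ range N, x n ^ 2 := by
  cases N with
  | zero => simp
  | succ N =>
    have := sum_lWeight_mul_partialSum_sq_add_le hs x N
    have : 0 ≤ hardyRemainder N * partialSum x N ^ 2 := by unfold hardyRemainder; positivity
    linarith

theorem summable_lWeight_mul_partialSum_sq_and_tsum_le (hs : 707 / 2000 ≤ s) {x : ℕ → ℝ}
    (hx : Summable fun n => x n ^ 2) :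
    Summable (fun n => lWeight s n * partialSum x n ^ 2) ∧
      ∑' n, lWeight s n * partialSum x n ^ 2 ≤ 4 * ∑' n, x n ^ 2 := by
  have hnonneg n : 0 ≤ lWeight s n * partialSum x n ^ 2 :=
    mul_nonneg (lWeight_nonneg (by linarith) n) (sq_nonneg _)
  have hbound N : ∑ n ∈ range N, lWeight s n * partialSum x n ^ 2 ≤ 4 * ∑' n, x n ^ 2 :=
    (sum_range_lWeight_mul_partialSum_sq_le hs x N).trans <| by
      gcongr; exact hx.sum_le_tsum _ fun n _ => sq_nonneg _
  exact ⟨summable_of_sum_range_le hnonneg hbound, Real.tsum_le_of_sum_range_le hnonneg hbound⟩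

lemma hasSum_lWeight_tail (hs : 0 < s) (m : ℕ) :
    HasSum (fun n => if m ≤ n then lWeight s n else 0) (1 / (m + s)) := by
  set g : ℕ → ℝ := fun n => 1 / (max (m : ℝ) n + s)
  have hg n : (if m ≤ n then lWeight s n else 0) = g n - g (n + 1) := by
    simp only [g]
    split_ifs with h
    · have h' : (m : ℝ) ≤ n := by exact_mod_cast h
      rw [max_eq_right h', max_eq_right (by push_cast; linarith), lWeight]
      push_cast
      field_simp
      ring
    · have h' : (n : ℝ) + 1 ≤ m := by exact_mod_cast (show n + 1 ≤ m by omega)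
      rw [max_eq_left (by linarith), max_eq_left (by push_cast; linarith), sub_self]
  have hg_lim : Tendsto g atTop (𝓝 0) := by
    simp only [g, one_div]
    refine Tendsto.inv_tendsto_atTop (tendsto_atTop_add_const_right _ _ ?_)
    exact tendsto_atTop_mono (fun n => le_max_right _ _) tendsto_natCast_atTop_atTop
  rw [hasSum_iff_tendsto_nat_of_nonneg fun n => by
    split_ifs
    exacts [lWeight_nonneg hs.le n, le_rfl]]
  simp_rw [hg, sum_range_sub']
  simpa [g] using (tendsto_const_nhds (x := g 0)).sub hg_lim

lemma hasSum_lWeight (hs : 0 < s) : HasSum (lWeight s) (1 / s) := by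
  simpa using hasSum_lWeight_tail hs 0

lemma hasSum_lWeight_mul_ite_mul_ite (hs : 0 < s) (i j : ℕ) (a b : ℝ) :
    HasSum (fun n => lWeight s n * (if i ≤ n then a else 0) * (if j ≤ n then b else 0))
      (a * b / ((max i j : ℝ) + s)) := by
  have h := (hasSum_lWeight_tail hs (max i j)).mul_left (a * b)
  rw [Nat.cast_max, mul_one_div] at h
  convert h using 1
  · rfl
  · funext n
    simp only [max_le_iff]
    split_ifs <;> first | omega | ring

lemma lWeight_mul_add_one (hs : 0 < s) (n : ℕ) :
    lWeight s n * (n + 1) = 1 / (n + s) - s * lWeight s n := by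
  unfold lWeight
  field_simp
  ring

end LWeight

noncomputable def lMul (s : ℝ) (x : ℕ → ℝ) (n : ℕ) : ℝ := ∑' j : ℕ, x j / ((max n j : ℝ) + s)

lemma sum_range_ite_le_eq_partialSum {v : ℕ → ℝ} {N : ℕ} (hv : ∀ n, N ≤ n → v n = 0) (n : ℕ) :
    ∑ i ∈ range N, (if i ≤ n then v i else 0) = partialSum v n := by
  rw [← sum_filter]
  refine sum_subset (fun i => by simp only [mem_filter, mem_range]; omega) fun i hi hi' => ?_
  simp only [mem_filter, mem_range, not_and] at hi hi'
  exact hv i (by by_contra h; exact hi' (by omega) (by omega))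

theorem tsum_mul_lMul_eq {s : ℝ} (hs : 0 < s) {z u : ℕ → ℝ} {N : ℕ}
    (hz : ∀ n, N ≤ n → z n = 0) (hu : ∀ n, N ≤ n → u n = 0) :
    ∑' i, z i * lMul s u i = ∑' n, lWeight s n * partialSum z n * partialSum u n := by
  set f : ℕ → ℕ → ℕ → ℝ := fun i j n =>
    lWeight s n * (if i ≤ n then z i else 0) * (if j ≤ n then u j else 0)
  have hf i j : HasSum (f i j) (z i * u j / ((max i j : ℝ) + s)) :=
    hasSum_lWeight_mul_ite_mul_ite hs i j (z i) (u j)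
  calc ∑' i, z i * lMul s u i
      = ∑ i ∈ range N, ∑ j ∈ range N, z i * u j / ((max i j : ℝ) + s) := by
        rw [tsum_eq_sum_range_of_eq_zero (fun n hn => by rw [hz n hn, zero_mul])]
        refine sum_congr rfl fun i _ => ?_
        rw [lMul, tsum_eq_sum_range_of_eq_zero (fun n hn => by rw [hu n hn, zero_div]), mul_sum]
        simp_rw [mul_div_assoc]
    _ = ∑ i ∈ range N, ∑' n, ∑ j ∈ range N, f i j n := by
        refine sum_congr rfl fun i _ => ?_
        rw [Summable.tsum_finsetSum fun j _ => (hf i j).summable]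
        exact sum_congr rfl fun j _ => (hf i j).tsum_eq.symm
    _ = ∑' n, ∑ i ∈ range N, ∑ j ∈ range N, f i j n :=
        (Summable.tsum_finsetSum fun i _ => summable_sum fun j _ => (hf i j).summable).symm
    _ = ∑' n, lWeight s n * partialSum z n * partialSum u n := by
        refine tsum_congr fun n => ?_
        rw [← sum_range_ite_le_eq_partialSum hz, ← sum_range_ite_le_eq_partialSum hu,
          mul_assoc, sum_mul_sum, mul_sum]
        simp_rw [mul_sum, f, mul_assoc]

theorem tsum_mul_lMul_le_of_eq_zero {s : ℝ} (hs : 707 / 2000 ≤ s) {z u : ℕ → ℝ} {N : ℕ}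
    (hz : ∀ n, N ≤ n → z n = 0) (hu : ∀ n, N ≤ n → u n = 0) :
    ∑' i, z i * lMul s u i ≤ 4 * √(∑' i, z i ^ 2) * √(∑' i, u i ^ 2) := by
  have hw n : 0 ≤ lWeight s n := lWeight_nonneg (by linarith) n
  have hsq (v : ℕ → ℝ) n :
      (√(lWeight s n) * partialSum v n) ^ 2 = lWeight s n * partialSum v n ^ 2 := by
    rw [mul_pow, Real.sq_sqrt (hw n)]
  obtain ⟨hzs, hzt⟩ :=
    summable_lWeight_mul_partialSum_sq_and_tsum_le hs (summable_sq_of_eq_zero hz)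
  obtain ⟨hus, hut⟩ :=
    summable_lWeight_mul_partialSum_sq_and_tsum_le hs (summable_sq_of_eq_zero hu)
  calc ∑' i, z i * lMul s u i
      = ∑' n, (√(lWeight s n) * partialSum z n) * (√(lWeight s n) * partialSum u n) := by
        rw [tsum_mul_lMul_eq (by linarith) hz hu]
        refine tsum_congr fun n => ?_
        rw [mul_mul_mul_comm, Real.mul_self_sqrt (hw n), mul_assoc]
    _ ≤ √(∑' n, lWeight s n * partialSum z n ^ 2) * √(∑' n, lWeight s n * partialSum u n ^ 2) := by
        have h := tsum_mul_le_sqrt_mul_sqrt (f := fun n => √(lWeight s n) * partialSum z n)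
          (g := fun n => √(lWeight s n) * partialSum u n) (by simpa only [hsq] using hzs)
          (by simpa only [hsq] using hus)
        simpa only [hsq] using h
    _ ≤ √(4 * ∑' i, z i ^ 2) * √(4 * ∑' i, u i ^ 2) := by gcongr
    _ = 4 * √(∑' i, z i ^ 2) * √(∑' i, u i ^ 2) := by
        rw [Real.sqrt_mul zero_le_four, Real.sqrt_mul zero_le_four, show √(4 : ℝ) = 2 by norm_num]
        ring

lemma summable_div_max_add {s : ℝ} (hs : 0 < s) {x : ℕ → ℝ} (hx : Summable fun n => x n ^ 2)
    (i : ℕ) : Summable fun j => x j / ((max i j : ℝ) + s) := by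
  have hg : Summable fun j : ℕ => (1 / ((max i j : ℝ) + s)) ^ 2 := by
    refine .of_nonneg_of_le (fun j => sq_nonneg _) (fun j => ?_)
      ((Real.summable_one_div_nat_add_rpow s 2).mpr one_lt_two)
    rw [abs_of_pos (by positivity), Real.rpow_two, div_pow, one_pow]
    gcongr
    exact le_max_right _ _
  simpa only [mul_one_div] using hx.mul_of_summable_sq hg

lemma tendsto_lMul_ite_lt {s : ℝ} (hs : 0 < s) {x : ℕ → ℝ} (hx : Summable fun n => x n ^ 2)
    (i : ℕ) :
    Tendsto (fun K => lMul s (fun j => if j < K then x j else 0) i) atTop (𝓝 (lMul s x i)) := by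
  have h K : lMul s (fun j => if j < K then x j else 0) i
      = ∑ j ∈ range K, x j / ((max i j : ℝ) + s) := by
    rw [lMul, tsum_eq_sum_range_of_eq_zero (N := K) fun n hn => by rw [if_neg (by omega), zero_div]]
    exact sum_congr rfl fun j hj => by rw [if_pos (mem_range.mp hj)]
  simp only [h]
  exact (summable_div_max_add hs hx i).hasSum.tendsto_sum_nat

theorem tsum_mul_lMul_le {s : ℝ} (hs : 707 / 2000 ≤ s) {z x : ℕ → ℝ} {N : ℕ}
    (hz : ∀ n, N ≤ n → z n = 0) (hx : Summable fun n => x n ^ 2) :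
    ∑' i, z i * lMul s x i ≤ 4 * √(∑' i, z i ^ 2) * √(∑' i, x i ^ 2) := by
  have hz' (y : ℕ → ℝ) n (hn : N ≤ n) : z n * lMul s y n = 0 := by rw [hz n hn, zero_mul]
  rw [tsum_eq_sum_range_of_eq_zero (hz' x)]
  refine le_of_tendsto' (tendsto_finsetSum _ fun i _ =>
    (tendsto_lMul_ite_lt (by linarith) hx i).const_mul (z i)) fun K => ?_
  set xK : ℕ → ℝ := fun j => if j < K then x j else 0
  have hzK n (hn : max N K ≤ n) : z n = 0 := hz n (le_of_max_le_left hn)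
  have hxK n (hn : max N K ≤ n) : xK n = 0 := if_neg (by omega)
  have hxKx : ∑' i, xK i ^ 2 ≤ ∑' i, x i ^ 2 := by
    refine Summable.tsum_le_tsum (fun j => ?_) (summable_sq_of_eq_zero hxK) hx
    simp only [xK]
    split_ifs
    exacts [le_rfl, by rw [sq, zero_mul]; exact sq_nonneg _]
  calc ∑ i ∈ range N, z i * lMul s xK i
      = ∑' i, z i * lMul s xK i := (tsum_eq_sum_range_of_eq_zero (hz' xK)).symm
    _ ≤ 4 * √(∑' i, z i ^ 2) * √(∑' i, xK i ^ 2) := tsum_mul_lMul_le_of_eq_zero hs hzK hxK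
    _ ≤ 4 * √(∑' i, z i ^ 2) * √(∑' i, x i ^ 2) := by gcongr

theorem sum_range_lMul_sq_le {s : ℝ} (hs : 707 / 2000 ≤ s) {x : ℕ → ℝ}
    (hx : Summable fun n => x n ^ 2) (M : ℕ) :
    ∑ n ∈ range M, lMul s x n ^ 2 ≤ 16 * ∑' n, x n ^ 2 := by
  set z : ℕ → ℝ := fun n => if n < M then lMul s x n else 0
  have hz n (hn : M ≤ n) : z n = 0 := if_neg (by omega)
  have hzx : ∑' i, z i * lMul s x i = ∑ n ∈ range M, lMul s x n ^ 2 := by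
    rw [tsum_eq_sum_range_of_eq_zero fun n hn => by rw [hz n hn, zero_mul]]
    exact sum_congr rfl fun n hn => by simp only [z, if_pos (mem_range.mp hn), sq]
  have hzz : ∑' i, z i ^ 2 = ∑ n ∈ range M, lMul s x n ^ 2 := by
    rw [tsum_eq_sum_range_of_eq_zero fun n hn => by rw [hz n hn, sq, zero_mul]]
    exact sum_congr rfl fun n hn => by simp only [z, if_pos (mem_range.mp hn)]
  have h := tsum_mul_lMul_le hs hz hx
  rw [hzx, hzz, mul_right_comm] at h
  calc ∑ n ∈ range M, lMul s x n ^ 2 ≤ (4 * √(∑' n, x n ^ 2)) ^ 2 := le_sq_of_le_mul_sqrt h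
    _ = 16 * ∑' n, x n ^ 2 := by
        rw [mul_pow, Real.sq_sqrt (tsum_nonneg fun n => sq_nonneg _)]
        norm_num

noncomputable def lRatio (s : ℝ) (x : ℕ → ℝ) : ℝ := √(∑' n, lMul s x n ^ 2) / √(∑' n, x n ^ 2)

section Ratio

variable {s : ℝ} {x : ℕ → ℝ}

theorem summable_lMul_sq (hs : 707 / 2000 ≤ s) (hx : Summable fun n => x n ^ 2) :
    Summable fun n => lMul s x n ^ 2 :=
  summable_of_sum_range_le (fun _ => sq_nonneg _) (sum_range_lMul_sq_le hs hx)

theorem lRatio_le_four (hs : 707 / 2000 ≤ s) (hx : Summable fun n => x n ^ 2) :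
    lRatio s x ≤ 4 :=
  div_le_of_le_mul₀ (Real.sqrt_nonneg _) zero_le_four <|
    calc √(∑' n, lMul s x n ^ 2) ≤ √(16 * ∑' n, x n ^ 2) :=
          Real.sqrt_le_sqrt (Real.tsum_le_of_sum_range_le (fun _ => sq_nonneg _)
            (sum_range_lMul_sq_le hs hx))
      _ = 4 * √(∑' n, x n ^ 2) := by
          rw [Real.sqrt_mul (by norm_num), show √(16 : ℝ) = 4 by norm_num]

theorem tsum_mul_lMul_div_le_lRatio (hs : 707 / 2000 ≤ s) (hx : Summable fun n => x n ^ 2) :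
    (∑' n, x n * lMul s x n) / ∑' n, x n ^ 2 ≤ lRatio s x := by
  have hR : 0 ≤ lRatio s x := by unfold lRatio; positivity
  rcases (tsum_nonneg fun n => sq_nonneg (x n)).eq_or_lt with hX | hX
  · rwa [← hX, div_zero]
  calc (∑' n, x n * lMul s x n) / ∑' n, x n ^ 2
      ≤ (√(∑' n, x n ^ 2) * √(∑' n, lMul s x n ^ 2)) / (√(∑' n, x n ^ 2) * √(∑' n, x n ^ 2)) := by
        rw [Real.mul_self_sqrt hX.le]
        gcongr
        exact tsum_mul_le_sqrt_mul_sqrt hx (summable_lMul_sq hs hx)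
    _ = lRatio s x := mul_div_mul_left _ _ (Real.sqrt_pos.mpr hX).ne'

end Ratio

noncomputable def sqrtIncrements (N k : ℕ) : ℝ := if k < N then √(k + 1) - √k else 0

lemma sqrtIncrements_eq_zero {N k : ℕ} (hk : N ≤ k) : sqrtIncrements N k = 0 :=
  if_neg (by omega)

lemma sqrtIncrements_zero {N : ℕ} (hN : 0 < N) : sqrtIncrements N 0 = 1 := by
  simp [sqrtIncrements, hN]

lemma partialSum_sqrtIncrements {N n : ℕ} (hn : n < N) :
    partialSum (sqrtIncrements N) n = √(n + 1) := by
  have h := sum_range_sub (fun k : ℕ => √k) (n + 1)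
  push_cast at h
  rw [partialSum, ← sub_zero √(n + 1 : ℝ), ← Real.sqrt_zero, ← h]
  exact sum_congr rfl fun k hk => if_pos (by simp at hk; omega)

lemma sqrtIncrements_sq_le (N k : ℕ) : sqrtIncrements N k ^ 2 ≤ 1 / 4 * (1 / (k + 1 / 4)) := by
  have hk : (0 : ℝ) ≤ k := k.cast_nonneg
  unfold sqrtIncrements
  split_ifs
  · set a := √(k + 1 : ℝ)
    set b := √(k : ℝ)
    have ha : a ^ 2 = k + 1 := Real.sq_sqrt (by positivity)
    have hb : b ^ 2 = k := Real.sq_sqrt hk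
    have hab : b ≤ a := Real.sqrt_le_sqrt (by linarith)
    have hb0 : 0 ≤ b := Real.sqrt_nonneg _
    -- `(a - b)² (a + b)² = 1` and `(a + b)² ≥ 4k + 1` because `ab ≥ b² = k`
    rw [show 1 / 4 * (1 / ((k : ℝ) + 1 / 4)) = 1 / (4 * k + 1) by field_simp,
      le_div_iff₀ (by positivity)]
    nlinarith [mul_le_mul_of_nonneg_left hab hb0]
  · rw [sq, zero_mul]; positivity

theorem tsum_sqrtIncrements_sq_le (N : ℕ) :
    ∑' k, sqrtIncrements N k ^ 2 ≤ 1 / 4 * ∑ k ∈ range N, 1 / ((k : ℝ) + 1 / 4) := by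
  rw [tsum_eq_sum_range_of_eq_zero fun k hk => by rw [sqrtIncrements_eq_zero hk, sq, zero_mul],
    mul_sum]
  exact sum_le_sum fun k _ => sqrtIncrements_sq_le N k

theorem log_sub_log_sub_one_le_tsum_lWeight_mul_partialSum_sq {s : ℝ} (hs : 707 / 2000 ≤ s)
    (N : ℕ) :
    Real.log (N + s) - Real.log s - 1
      ≤ ∑' n, lWeight s n * partialSum (sqrtIncrements N) n ^ 2 := by
  have hs0 : 0 < s := by linarith
  have hw : s * ∑ n ∈ range N, lWeight s n ≤ 1 := by
    calc s * ∑ n ∈ range N, lWeight s n ≤ s * (1 / s) := by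
          gcongr
          exact sum_le_hasSum _ (fun n _ => lWeight_nonneg hs0.le n) (hasSum_lWeight hs0)
      _ = 1 := mul_one_div_cancel hs0.ne'
  calc Real.log (N + s) - Real.log s - 1
      ≤ ∑ n ∈ range N, 1 / (n + s) - s * ∑ n ∈ range N, lWeight s n := by
        linarith [log_add_sub_log_le_sum_range hs0 N]
    _ = ∑ n ∈ range N, lWeight s n * partialSum (sqrtIncrements N) n ^ 2 := by
        rw [mul_sum, ← sum_sub_distrib]
        refine sum_congr rfl fun n hn => ?_
        rw [partialSum_sqrtIncrements (mem_range.mp hn), Real.sq_sqrt (by positivity),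
          lWeight_mul_add_one hs0]
    _ ≤ ∑' n, lWeight s n * partialSum (sqrtIncrements N) n ^ 2 :=
        (summable_lWeight_mul_partialSum_sq_and_tsum_le hs
          (summable_sq_of_eq_zero fun _ => sqrtIncrements_eq_zero)).1.sum_le_tsum _
          fun n _ => mul_nonneg (lWeight_nonneg hs0.le n) (sq_nonneg _)

theorem le_lRatio_sqrtIncrements {s : ℝ} (hs : 707 / 2000 ≤ s) {N : ℕ} (hN : 0 < N)
    (hL : Real.log s + 1 ≤ Real.log (N + 1 / 4)) :
    4 * (Real.log (N + 1 / 4) - (Real.log s + 1)) / (Real.log (N + 1 / 4) + (4 + Real.log 4))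
      ≤ lRatio s (sqrtIncrements N) := by
  set x := sqrtIncrements N
  set L := Real.log (N + 1 / 4)
  have hs0 : 0 < s := by linarith
  have hsupp n (hn : N ≤ n) : x n = 0 := sqrtIncrements_eq_zero hn
  have hx : Summable fun n => x n ^ 2 := summable_sq_of_eq_zero hsupp
  have hQ : L - (Real.log s + 1) ≤ ∑' n, x n * lMul s x n := by
    have hLs : L ≤ Real.log (N + s) := Real.log_le_log (by positivity) (by linarith)
    rw [tsum_mul_lMul_eq hs0 hsupp hsupp]
    simp_rw [mul_assoc, ← sq]
    linarith [log_sub_log_sub_one_le_tsum_lWeight_mul_partialSum_sq hs N]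
  have hX : ∑' n, x n ^ 2 ≤ (L + (4 + Real.log 4)) / 4 := by
    have h := sum_range_le_one_div_add_log_sub_log (show (0 : ℝ) < 1 / 4 by norm_num) N
    rw [one_div (4 : ℝ), Real.log_inv] at h
    linarith [tsum_sqrtIncrements_sq_le N]
  have hX0 : 0 < ∑' n, x n ^ 2 :=
    hx.tsum_pos (fun _ => sq_nonneg _) 0 (by simp [x, sqrtIncrements_zero hN])
  calc 4 * (L - (Real.log s + 1)) / (L + (4 + Real.log 4))
      = (L - (Real.log s + 1)) / ((L + (4 + Real.log 4)) / 4) := by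
        rw [div_div_eq_mul_div, mul_comm 4]
    _ ≤ (∑' n, x n * lMul s x n) / ∑' n, x n ^ 2 := div_le_div₀ (by linarith) hQ hX0 hX
    _ ≤ lRatio s x := tsum_mul_lMul_div_le_lRatio hs hx

/-- For every `s ≥ 1/(2√2)`, the operator norm of `A_s` on `ℓ²` equals `4`. -/
theorem As_opNorm_eq_four (s : ℝ) (hs : 1 / (2 * Real.sqrt 2) ≤ s) :
    AsOpNorm s = 4 := by
  have hs' : 707 / 2000 ≤ s := le_one_div_two_mul_sqrt_two.trans hs
  have hle : ∀ r ∈ {r : ℝ | ∃ x : ℕ → ℝ, Summable (fun n => x n ^ 2) ∧ x ≠ 0 ∧ r = lRatio s x},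
      r ≤ 4 := by
    rintro r ⟨x, hx, -, rfl⟩
    exact lRatio_le_four hs' hx
  refine le_antisymm (Real.sSup_le hle zero_le_four) ?_
  have hL : Tendsto (fun N : ℕ => Real.log (N + 1 / 4)) atTop atTop :=
    Real.tendsto_log_atTop.comp (tendsto_atTop_add_const_right _ _ tendsto_natCast_atTop_atTop)
  refine le_of_tendsto
    ((tendsto_mul_sub_div_add_atTop 4 (Real.log s + 1) (4 + Real.log 4)).comp hL) ?_
  filter_upwards [hL.eventually_ge_atTop (Real.log s + 1), eventually_gt_atTop 0] with N hLN hN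
  have hx0 : sqrtIncrements N ≠ 0 := fun h => by simpa [h] using sqrtIncrements_zero hN
  exact (le_lRatio_sqrtIncrements hs' hN hLN).trans (le_csSup ⟨4, hle⟩
    ⟨_, summable_sq_of_eq_zero fun _ => sqrtIncrements_eq_zero, hx0, rfl⟩)
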